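/- arXiv:quant-ph/0205128 — 2 statements merged into one kernel-verified Lean document; each statement's English description precedes it below -/
import Mathlib

section
/- Let ρ₀ and ρ₁ be density matrices on a finite-dimensional Hilbert space with trace distance D(ρ₀,ρ₁) = δ. Then the trace distance of the t-fold tensor powers satisfies D(ρ₀^⊗t, ρ₁^⊗t) ≥ 1 - 2·exp(-t·δ²/2). -/
open Matrix BigOperators
open scoped ComplexOrder

/-- Trace distance between two matrices, characterized as the supremum over
POVM elements `P` (with `0 ≤ P ≤ I`) of `Re Tr(P (A - B))`. -/
noncomputable def traceDist {n : Type*} [Fintype n] [DecidableEq n]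
    (A B : Matrix n n ℂ) : ℝ :=
  sSup {x : ℝ | ∃ P : Matrix n n ℂ, P.PosSemidef ∧ (1 - P).PosSemidef ∧
    x = ((P * (A - B)).trace).re}

/-- `t`-fold tensor power of a matrix. -/
noncomputable def tensorPow {n : Type*} [Fintype n] [DecidableEq n]
    (ρ : Matrix n n ℂ) (t : ℕ) : Matrix (Fin t → n) (Fin t → n) ℂ :=
  fun x y => ∏ i, ρ (x i) (y i)

/-!
Take a POVM element `P` with `p - q` close to `δ`, where `p = Tr(P ρ₀)` and `q = Tr(P ρ₁)`.
Measure each of the `t` copies with `{P, 1 - P}` and accept when at least `t (p + q) / 2` of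
the outcomes are `P`; this classical post-processing is again a POVM element on the tensor
power. By Hoeffding's inequality it accepts `ρ₀^⊗t` with probability at least
`1 - exp(-t (p - q)² / 2)` and `ρ₁^⊗t` with probability at most `exp(-t (p - q)² / 2)`.
The bound is monotone and continuous in `p - q`, so it passes to the supremum over `P`.
-/

open MeasureTheory ProbabilityTheory Finset

namespace Matrix

section PiTensor

variable {ι n R : Type*} [Fintype ι]

def piTensor [CommMonoid R] (E : ι → Matrix n n R) : Matrix (ι → n) (ι → n) R :=
  fun x y ↦ ∏ i, E i (x i) (y i)

theorem conjTranspose_piTensor [CommSemiring R] [StarRing R] (E : ι → Matrix n n R) :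
    (piTensor E)ᴴ = piTensor fun i ↦ (E i)ᴴ := by
  ext x y
  simp [piTensor, conjTranspose_apply, star_prod]

theorem piTensor_one [CommSemiring R] [DecidableEq n] :
    piTensor (fun _ : ι ↦ (1 : Matrix n n R)) = 1 := by
  ext x y
  simp [piTensor, one_apply, Finset.prod_ite_zero, funext_iff]

variable [DecidableEq ι]

theorem sum_piTensor [CommSemiring R] {κ : Type*} [Fintype κ] (G : ι → κ → Matrix n n R) :
    ∑ s : ι → κ, piTensor (fun i ↦ G i (s i)) = piTensor fun i ↦ ∑ k, G i k := by
  ext x y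
  simp only [piTensor, sum_apply, Fintype.prod_sum]

variable [Fintype n]

theorem piTensor_mul [CommSemiring R] (E F : ι → Matrix n n R) :
    piTensor E * piTensor F = piTensor fun i ↦ E i * F i := by
  ext x y
  simp only [piTensor, mul_apply, Fintype.prod_sum, Finset.prod_mul_distrib]

theorem trace_piTensor [CommSemiring R] (E : ι → Matrix n n R) :
    (piTensor E).trace = ∏ i, (E i).trace := by
  simp only [trace, diag, piTensor, Fintype.prod_sum]

open scoped MatrixOrder in
theorem PosSemidef.piTensor [DecidableEq n] {E : ι → Matrix n n ℂ}
    (hE : ∀ i, (E i).PosSemidef) : (Matrix.piTensor E).PosSemidef := by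
  choose C hC using fun i ↦ CStarAlgebra.nonneg_iff_eq_star_mul_self.mp (hE i).nonneg
  have : Matrix.piTensor E = (Matrix.piTensor C)ᴴ * Matrix.piTensor C := by
    rw [conjTranspose_piTensor, piTensor_mul]
    exact congrArg _ (funext hC)
  exact this ▸ posSemidef_conjTranspose_mul_self _

end PiTensor

end Matrix

theorem tensorPow_eq_piTensor {n : Type*} [Fintype n] [DecidableEq n] (ρ : Matrix n n ℂ) (t : ℕ) :
    tensorPow ρ t = piTensor fun _ ↦ ρ :=
  rfl

section TraceDistance

variable {n : Type*} [Fintype n] [DecidableEq n] {A B : Matrix n n ℂ}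

open scoped MatrixOrder in
theorem Matrix.PosSemidef.trace_mul_nonneg (hA : A.PosSemidef) (hB : B.PosSemidef) :
    0 ≤ (A * B).trace := by
  obtain ⟨C, rfl⟩ := CStarAlgebra.nonneg_iff_eq_star_mul_self.mp hA.nonneg
  rw [star_eq_conjTranspose, Matrix.mul_assoc, trace_mul_comm]
  exact (hB.mul_mul_conjTranspose_same C).trace_nonneg

theorem Matrix.PosSemidef.trace_mul_eq_re (hA : A.PosSemidef) (hB : B.PosSemidef) :
    (A * B).trace = ((A * B).trace.re : ℂ) :=
  Complex.eq_re_of_ofReal_le (Complex.ofReal_zero ▸ hA.trace_mul_nonneg hB)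

def povmBiases (A B : Matrix n n ℂ) : Set ℝ :=
  {x | ∃ P : Matrix n n ℂ, P.PosSemidef ∧ (1 - P).PosSemidef ∧ x = ((P * (A - B)).trace).re}

theorem traceDist_eq_sSup_povmBiases : traceDist A B = sSup (povmBiases A B) :=
  rfl

theorem zero_mem_povmBiases : 0 ∈ povmBiases A B :=
  ⟨0, PosSemidef.zero, by simpa using PosSemidef.one, by simp⟩

theorem bddAbove_povmBiases (hA : A.PosSemidef) (hB : B.PosSemidef) :
    BddAbove (povmBiases A B) := by
  refine ⟨A.trace.re, ?_⟩
  rintro _ ⟨P, hP, hP1, rfl⟩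
  have hPB := (Complex.nonneg_iff.1 (hP.trace_mul_nonneg hB)).1
  have hPA := (Complex.nonneg_iff.1 (hP1.trace_mul_nonneg hA)).1
  simp only [Matrix.mul_sub, Matrix.sub_mul, trace_sub, Matrix.one_mul, Complex.sub_re] at hPA ⊢
  linarith

theorem re_trace_mul_sub_le_traceDist (hA : A.PosSemidef) (hB : B.PosSemidef)
    {P : Matrix n n ℂ} (hP : P.PosSemidef) (hP1 : (1 - P).PosSemidef) :
    ((P * (A - B)).trace).re ≤ traceDist A B :=
  le_csSup (bddAbove_povmBiases hA hB) ⟨P, hP, hP1, rfl⟩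

theorem traceDist_nonneg (hA : A.PosSemidef) (hB : B.PosSemidef) : 0 ≤ traceDist A B :=
  le_csSup (bddAbove_povmBiases hA hB) zero_mem_povmBiases

theorem Monotone.map_traceDist_le {g : ℝ → ℝ} (hg : Monotone g) (hgc : Continuous g)
    (hA : A.PosSemidef) (hB : B.PosSemidef) {c : ℝ} (hc : ∀ x ∈ povmBiases A B, g x ≤ c) :
    g (traceDist A B) ≤ c := by
  rw [traceDist_eq_sSup_povmBiases,
    hg.map_csSup_of_continuousAt hgc.continuousAt ⟨0, zero_mem_povmBiases⟩
      (bddAbove_povmBiases hA hB)]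
  exact csSup_le (Set.image_nonempty.2 ⟨0, zero_mem_povmBiases⟩) (Set.forall_mem_image.2 hc)

end TraceDistance

section ProductMeasurement

variable {ι n κ : Type*} [Fintype ι] {E : κ → Matrix n n ℂ}

def acceptEffect (E : κ → Matrix n n ℂ) (S : Finset (ι → κ)) : Matrix (ι → n) (ι → n) ℂ :=
  ∑ s ∈ S, piTensor fun i ↦ E (s i)

variable [DecidableEq ι]

theorem one_sub_acceptEffect [DecidableEq n] [Fintype κ] [DecidableEq κ] (hE : ∑ k, E k = 1)
    (S : Finset (ι → κ)) : 1 - acceptEffect E S = acceptEffect E Sᶜ := by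
  rw [← piTensor_one, ← hE, ← sum_piTensor, ← sum_add_sum_compl S, acceptEffect, acceptEffect,
    add_sub_cancel_left]

variable [Fintype n]

theorem trace_acceptEffect_mul_piTensor (S : Finset (ι → κ)) (ρ : ι → Matrix n n ℂ) :
    (acceptEffect E S * piTensor ρ).trace = ∑ s ∈ S, ∏ i, (E (s i) * ρ i).trace := by
  simp only [acceptEffect, Finset.sum_mul, trace_sum, piTensor_mul, trace_piTensor]

theorem posSemidef_acceptEffect [DecidableEq n] (hE : ∀ k, (E k).PosSemidef)
    (S : Finset (ι → κ)) : (acceptEffect E S).PosSemidef :=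
  posSemidef_sum S fun s _ ↦ PosSemidef.piTensor fun i ↦ hE (s i)

end ProductMeasurement

theorem hoeffding_sum_prod_le {ι κ : Type*} [Fintype ι] [DecidableEq ι] [Fintype κ]
    {w : κ → ℝ} (hw₀ : ∀ k, 0 ≤ w k) (hw₁ : ∑ k, w k = 1) {f : κ → ℝ}
    (hf : ∀ k, f k ∈ Set.Icc 0 1) {η : ℝ} (hη : 0 ≤ η) (S : Finset (ι → κ))
    (hS : ∀ s ∈ S, Fintype.card ι * η ≤ ∑ i, (f (s i) - ∑ k, w k * f k)) :
    ∑ s ∈ S, ∏ i, w (s i) ≤ Real.exp (-2 * Fintype.card ι * η ^ 2) := by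
  let _ : MeasurableSpace κ := ⊤
  let ν : Measure κ := (PMF.ofFintype (fun k ↦ ENNReal.ofReal (w k))
    (by rw [← ENNReal.ofReal_sum_of_nonneg fun k _ ↦ hw₀ k, hw₁, ENNReal.ofReal_one])).toMeasure
  have hν : ∀ k, ν.real {k} = w k := fun k ↦ by
    rw [measureReal_def, PMF.toMeasure_apply_singleton _ _ (measurableSet_singleton k),
      PMF.ofFintype_apply, ENNReal.toReal_ofReal (hw₀ k)]
  have hmean : ∫ k, f k ∂ν = ∑ k, w k * f k := by simp [integral_fintype, hν]
  let μ := Measure.pi fun _ : ι ↦ ν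
  have hμ : ∀ s, μ.real {s} = ∏ i, w (s i) := fun s ↦ by
    simp [μ, measureReal_def, Measure.pi_singleton, ENNReal.toReal_prod, ← hν]
  have hsub : ∀ i ∈ (univ : Finset ι), HasSubgaussianMGF
      (fun s : ι → κ ↦ f (s i) - ∑ k, w k * f k) ((‖(1 : ℝ) - 0‖₊ / 2) ^ 2) μ := by
    intro i _
    have := hasSubgaussianMGF_of_mem_Icc (μ := μ) (X := fun s ↦ f (s i))
      (Measurable.of_discrete.comp (measurable_pi_apply i)).aemeasurable
      (ae_of_all _ fun s ↦ hf (s i))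
    rwa [integral_comp_eval Measurable.of_discrete.aestronglyMeasurable, hmean] at this
  have hindep : iIndepFun (fun i (s : ι → κ) ↦ f (s i) - ∑ k, w k * f k) μ :=
    iIndepFun_pi (X := fun _ k ↦ f k - ∑ k, w k * f k) fun _ ↦ Measurable.of_discrete.aemeasurable
  calc ∑ s ∈ S, ∏ i, w (s i) = μ.real S := by simp_rw [← hμ, sum_measureReal_singleton]
    _ ≤ μ.real {s | Fintype.card ι * η ≤ ∑ i ∈ univ, (f (s i) - ∑ k, w k * f k)} :=
        measureReal_mono hS
    _ ≤ _ := HasSubgaussianMGF.measure_sum_ge_le_of_iIndepFun hindep hsub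
        (mul_nonneg (Nat.cast_nonneg _) hη)
    _ = Real.exp (-2 * Fintype.card ι * η ^ 2) := by
        rcases isEmpty_or_nonempty ι with hι | hι
        · simp
        · simp only [sub_zero, nnnorm_one, one_div, inv_pow, sum_const, card_univ, nsmul_eq_mul,
            NNReal.coe_mul, NNReal.coe_natCast, NNReal.coe_inv, NNReal.coe_pow, NNReal.coe_ofNat]
          field_simp

theorem one_sub_two_mul_exp_le_sum_majority {ι : Type*} [Fintype ι] [DecidableEq ι]
    {w₀ w₁ : Bool → ℝ} (hw₀ : ∀ b, 0 ≤ w₀ b) (hw₀₁ : ∑ b, w₀ b = 1) (hw₁ : ∀ b, 0 ≤ w₁ b)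
    (hw₁₁ : ∑ b, w₁ b = 1) (hle : w₁ true ≤ w₀ true) :
    1 - 2 * Real.exp (-Fintype.card ι * (w₀ true - w₁ true) ^ 2 / 2) ≤
      ∑ s : ι → Bool with Fintype.card ι * (w₀ true + w₁ true) / 2 ≤
        ∑ i, (if s i then 1 else 0 : ℝ), (∏ i, w₀ (s i) - ∏ i, w₁ (s i)) := by
  set count : (ι → Bool) → ℝ := fun s ↦ ∑ i, if s i then 1 else 0
  set S := ({s : ι → Bool | Fintype.card ι * (w₀ true + w₁ true) / 2 ≤ count s} : Finset _)
  have hη : 0 ≤ (w₀ true - w₁ true) / 2 := by linarith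
  have hexp : Real.exp (-2 * Fintype.card ι * ((w₀ true - w₁ true) / 2) ^ 2) =
      Real.exp (-Fintype.card ι * (w₀ true - w₁ true) ^ 2 / 2) := by ring_nf
  have hw₀false : w₀ false = 1 - w₀ true := by rw [Fintype.sum_bool] at hw₀₁; linarith
  have hmean₁ : ∑ b, w₁ b * (if b then 1 else 0) = w₁ true := by simp
  have hmean₀ : ∑ b, w₀ b * (1 - if b then 1 else 0) = 1 - w₀ true := by simp [hw₀false]
  have hacc : ∑ s ∈ S, ∏ i, w₁ (s i) ≤ Real.exp (-Fintype.card ι * (w₀ true - w₁ true) ^ 2 / 2) :=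
    hexp ▸ hoeffding_sum_prod_le hw₁ hw₁₁ (f := fun b ↦ if b then 1 else 0)
      (by simp) hη S fun s hs ↦ by
        simp only [S, mem_filter, mem_univ, true_and] at hs
        simp only [hmean₁, sum_sub_distrib, sum_const, card_univ, nsmul_eq_mul]
        linarith
  have hrej : ∑ s ∈ Sᶜ, ∏ i, w₀ (s i) ≤ Real.exp (-Fintype.card ι * (w₀ true - w₁ true) ^ 2 / 2) :=
    hexp ▸ hoeffding_sum_prod_le hw₀ hw₀₁ (f := fun b ↦ 1 - if b then 1 else 0)
      (by simp) hη Sᶜ fun s hs ↦ by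
        simp only [S, compl_filter, mem_filter, mem_univ, true_and, not_le] at hs
        simp only [hmean₀, sum_sub_distrib, sum_const, card_univ, nsmul_eq_mul, mul_one]
        linarith
  have htotal : ∑ s ∈ S, ∏ i, w₀ (s i) + ∑ s ∈ Sᶜ, ∏ i, w₀ (s i) = 1 := by
    rw [sum_add_sum_compl, ← Fintype.prod_sum, hw₀₁, prod_const_one]
  rw [sum_sub_distrib]
  linarith

theorem one_sub_two_mul_exp_le_traceDist_tensorPow {n : Type*} [Fintype n] [DecidableEq n]
    {ρ₀ ρ₁ P : Matrix n n ℂ} (h₀ : ρ₀.PosSemidef) (h₁ : ρ₁.PosSemidef)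
    (ht₀ : ρ₀.trace = 1) (ht₁ : ρ₁.trace = 1) (hP : P.PosSemidef) (hP1 : (1 - P).PosSemidef)
    (hγ : 0 ≤ ((P * (ρ₀ - ρ₁)).trace).re) (t : ℕ) :
    1 - 2 * Real.exp (-t * ((P * (ρ₀ - ρ₁)).trace).re ^ 2 / 2) ≤
      traceDist (tensorPow ρ₀ t) (tensorPow ρ₁ t) := by
  let E : Bool → Matrix n n ℂ := fun b ↦ if b then P else 1 - P
  have hE : ∀ b, (E b).PosSemidef := Bool.forall_bool.2 ⟨hP1, hP⟩
  have hE1 : ∑ b, E b = 1 := by simp [E]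
  let w (ρ : Matrix n n ℂ) (b : Bool) : ℝ := ((E b * ρ).trace).re
  have hw : ∀ {ρ : Matrix n n ℂ}, ρ.PosSemidef → ∀ b, (E b * ρ).trace = w ρ b :=
    fun hρ b ↦ (hE b).trace_mul_eq_re hρ
  have hw_nonneg : ∀ {ρ : Matrix n n ℂ}, ρ.PosSemidef → ∀ b, 0 ≤ w ρ b :=
    fun hρ b ↦ (Complex.nonneg_iff.1 ((hE b).trace_mul_nonneg hρ)).1
  have hw_sum : ∀ {ρ : Matrix n n ℂ}, ρ.trace = 1 → ∑ b, w ρ b = 1 := fun hρ ↦ by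
    rw [← Complex.re_sum, ← trace_sum, ← Finset.sum_mul, hE1, Matrix.one_mul, hρ, Complex.one_re]
  have hγw : ((P * (ρ₀ - ρ₁)).trace).re = w ρ₀ true - w ρ₁ true := by
    simp [w, E, Matrix.mul_sub]
  rw [hγw] at hγ ⊢
  let S : Finset (Fin t → Bool) := {s | t * (w ρ₀ true + w ρ₁ true) / 2 ≤
    ∑ i, (if s i then 1 else 0 : ℝ)}
  have hgap : ((acceptEffect E S * (tensorPow ρ₀ t - tensorPow ρ₁ t)).trace).re =
      ∑ s ∈ S, (∏ i, w ρ₀ (s i) - ∏ i, w ρ₁ (s i)) := by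
    simp only [Matrix.mul_sub, trace_sub, tensorPow_eq_piTensor, trace_acceptEffect_mul_piTensor,
      hw h₀, hw h₁, ← Complex.ofReal_prod, ← Complex.ofReal_sum, ← Complex.ofReal_sub,
      Complex.ofReal_re, sum_sub_distrib]
  calc 1 - 2 * Real.exp (-t * (w ρ₀ true - w ρ₁ true) ^ 2 / 2)
      ≤ ∑ s ∈ S, (∏ i, w ρ₀ (s i) - ∏ i, w ρ₁ (s i)) := by
        simpa only [Fintype.card_fin] using one_sub_two_mul_exp_le_sum_majority (ι := Fin t)
          (hw_nonneg h₀) (hw_sum ht₀) (hw_nonneg h₁) (hw_sum ht₁) (by linarith)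
    _ = ((acceptEffect E S * (tensorPow ρ₀ t - tensorPow ρ₁ t)).trace).re := hgap.symm
    _ ≤ traceDist (tensorPow ρ₀ t) (tensorPow ρ₁ t) :=
        re_trace_mul_sub_le_traceDist (PosSemidef.piTensor fun _ ↦ h₀)
          (PosSemidef.piTensor fun _ ↦ h₁) (posSemidef_acceptEffect hE S)
          (one_sub_acceptEffect hE1 S ▸ posSemidef_acceptEffect hE Sᶜ)

/-- If `D(ρ₀, ρ₁) = δ` for density matrices `ρ₀, ρ₁`, then
`D(ρ₀^⊗t, ρ₁^⊗t) ≥ 1 - 2 exp(-t δ²/2)`. -/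
theorem trace_dist_tensor_pow {n : Type*} [Fintype n] [DecidableEq n]
    (ρ₀ ρ₁ : Matrix n n ℂ) (h₀ : ρ₀.PosSemidef) (h₁ : ρ₁.PosSemidef)
    (ht₀ : ρ₀.trace = 1) (ht₁ : ρ₁.trace = 1)
    (δ : ℝ) (hδ : traceDist ρ₀ ρ₁ = δ) (t : ℕ) :
    traceDist (tensorPow ρ₀ t) (tensorPow ρ₁ t) ≥
      1 - 2 * Real.exp (-(t : ℝ) * δ ^ 2 / 2) := by
  subst hδ
  let g : ℝ → ℝ := fun x ↦ 1 - 2 * Real.exp (-t * max x 0 ^ 2 / 2)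
  have hg : Monotone g := fun x y hxy ↦ by
    simp only [g, neg_mul, neg_div]
    gcongr
  have hD : 0 ≤ traceDist (tensorPow ρ₀ t) (tensorPow ρ₁ t) :=
    traceDist_nonneg (PosSemidef.piTensor fun _ ↦ h₀) (PosSemidef.piTensor fun _ ↦ h₁)
  have hbound : ∀ x ∈ povmBiases ρ₀ ρ₁, g x ≤ traceDist (tensorPow ρ₀ t) (tensorPow ρ₁ t) := by
    rintro _ ⟨P, hP, hP1, rfl⟩
    rcases le_total ((P * (ρ₀ - ρ₁)).trace).re 0 with hγ | hγ
    · norm_num [g, max_eq_right hγ]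
      linarith
    · simpa only [g, max_eq_left hγ] using
        one_sub_two_mul_exp_le_traceDist_tensorPow h₀ h₁ ht₀ ht₁ hP hP1 hγ t
  simpa only [g, max_eq_left (traceDist_nonneg h₀ h₁)] using
    hg.map_traceDist_le (by fun_prop) h₀ h₁ hbound
end

section
/- Let |0̃⟩, |1̃⟩ be unit vectors in a Hilbert space H, and V₀, V₁ = I - V₀ complementary orthogonal projectors with ⟨0̃|V₀|0̃⟩ = p₀ and ⟨1̃|V₁|1̃⟩ = p₁. Let U = V₀ - V₁ (the conditional phase flip). Then |⟨φ| (1/√2)(|0̃⟩ - |1̃⟩)| ≥ p₀ + p₁ - 1, where |φ⟩ = U·(1/√2)(|0̃⟩ + |1̃⟩). -/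
/-!
Writing `U = V₀ - (I - V₀)`, which is self-adjoint, the overlap equals
`½ ⟪t0 + t1, U (t0 - t1)⟫`. Its real part is `½ (⟪t0, U t0⟫ - ⟪t1, U t1⟫)`, because the cross terms
`⟪t1, U t0⟫ - ⟪t0, U t1⟫` form a purely imaginary difference of conjugates, and for unit vectors
`Re ⟪t, U t⟫ = 2 Re ⟪t, V₀ t⟫ - 1`, giving `p₀ + p₁ - 1`. The norm dominates the real part.
-/

open scoped InnerProductSpace

namespace LinearMap.IsSymmetric

variable {𝕜 E : Type*} [RCLike 𝕜] [NormedAddCommGroup E] [InnerProductSpace 𝕜 E]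
  {T : E →ₗ[𝕜] E}

theorem re_inner_add_map_sub (hT : T.IsSymmetric) (x y : E) :
    RCLike.re ⟪x + y, T (x - y)⟫_𝕜 = RCLike.re ⟪x, T x⟫_𝕜 - RCLike.re ⟪y, T y⟫_𝕜 := by
  have hcross : RCLike.re ⟪y, T x⟫_𝕜 = RCLike.re ⟪x, T y⟫_𝕜 := by
    rw [← hT, ← inner_conj_symm, RCLike.conj_re]
  simp only [map_sub, inner_add_left, inner_sub_right, map_add, hcross]
  ring

end LinearMap.IsSymmetric

theorem inner_smul_inv_sqrt_two {E : Type*} [NormedAddCommGroup E] [InnerProductSpace ℂ E]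
    (x y : E) :
    ⟪(1 / Real.sqrt 2 : ℂ) • x, (1 / Real.sqrt 2 : ℂ) • y⟫_ℂ = ⟪x, y⟫_ℂ / 2 := by
  have hsq : ((Real.sqrt 2 : ℝ) : ℂ) ^ 2 = 2 := by
    norm_cast; exact Real.sq_sqrt zero_le_two
  rw [inner_smul_left, inner_smul_right, ← mul_assoc, map_div₀, map_one, Complex.conj_ofReal]
  field_simp
  rw [hsq, mul_comm]

theorem phase_flip_overlap_general {H : Type*} [NormedAddCommGroup H]
    [InnerProductSpace ℂ H]
    (V₀ : H →ₗ[ℂ] H)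
    (hsa : ∀ x y : H, ⟪V₀ x, y⟫_ℂ = ⟪x, V₀ y⟫_ℂ)
    (t0 t1 : H) (ht0 : ‖t0‖ = 1) (ht1 : ‖t1‖ = 1)
    (p₀ p₁ : ℝ)
    (hp₀ : p₀ = (⟪t0, V₀ t0⟫_ℂ).re)
    (hp₁ : p₁ = (⟪t1, ((LinearMap.id - V₀ : H →ₗ[ℂ] H)) t1⟫_ℂ).re)
    (φ : H)
    (hφ : φ = ((V₀ - (LinearMap.id - V₀) : H →ₗ[ℂ] H)) ((1 / Real.sqrt 2 : ℂ) • (t0 + t1))) :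
    ‖⟪φ, (1 / Real.sqrt 2 : ℂ) • (t0 - t1)⟫_ℂ‖ ≥ p₀ + p₁ - 1 := by
  set U : H →ₗ[ℂ] H := V₀ - (LinearMap.id - V₀)
  have hU : U.IsSymmetric := (show V₀.IsSymmetric from hsa).sub (.sub .id hsa)
  have hre_id_sub (x : H) (hx : ‖x‖ = 1) :
      (⟪x, (LinearMap.id - V₀ : H →ₗ[ℂ] H) x⟫_ℂ).re = 1 - (⟪x, V₀ x⟫_ℂ).re := by
    simp [hx]
  have hre_U (x : H) (hx : ‖x‖ = 1) : (⟪x, U x⟫_ℂ).re = 2 * (⟪x, V₀ x⟫_ℂ).re - 1 := by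
    rw [LinearMap.sub_apply, inner_sub_right, Complex.sub_re, hre_id_sub x hx]; ring
  calc ‖⟪φ, (1 / Real.sqrt 2 : ℂ) • (t0 - t1)⟫_ℂ‖
      ≥ (⟪φ, (1 / Real.sqrt 2 : ℂ) • (t0 - t1)⟫_ℂ).re := Complex.re_le_norm _
    _ = (⟪t0 + t1, U (t0 - t1)⟫_ℂ).re / 2 := by
        rw [hφ, hU, map_smul, inner_smul_inv_sqrt_two, Complex.div_ofNat_re]
    _ = ((⟪t0, U t0⟫_ℂ).re - (⟪t1, U t1⟫_ℂ).re) / 2 := by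
        rw [← RCLike.re_to_complex, hU.re_inner_add_map_sub]; rfl
    _ = p₀ + p₁ - 1 := by
        rw [hre_U t0 ht0, hre_U t1 ht1, hp₀, hp₁, hre_id_sub t1 ht1]; ring

/-- Core of the distinguish-to-disturb lemma: for orthogonal projectors
`V₀ + V₁ = I` with `⟨0̃|V₀|0̃⟩ = p₀`, `⟨1̃|V₁|1̃⟩ = p₁`, the conditional phase
flip `U = V₀ - V₁` maps `(|0̃⟩+|1̃⟩)/√2` to a state whose overlap with
`(|0̃⟩-|1̃⟩)/√2` has absolute value at least `p₀ + p₁ - 1`. -/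
theorem phase_flip_overlap {H : Type*} [NormedAddCommGroup H]
    [InnerProductSpace ℂ H]
    (V₀ : H →ₗ[ℂ] H)
    (hidem : V₀ ∘ₗ V₀ = V₀)
    (hsa : ∀ x y : H, ⟪V₀ x, y⟫_ℂ = ⟪x, V₀ y⟫_ℂ)
    (t0 t1 : H) (ht0 : ‖t0‖ = 1) (ht1 : ‖t1‖ = 1)
    (p₀ p₁ : ℝ)
    (hp₀ : p₀ = (⟪t0, V₀ t0⟫_ℂ).re)
    (hp₁ : p₁ = (⟪t1, ((LinearMap.id - V₀ : H →ₗ[ℂ] H)) t1⟫_ℂ).re)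
    (φ : H)
    (hφ : φ = ((V₀ - (LinearMap.id - V₀) : H →ₗ[ℂ] H)) ((1 / Real.sqrt 2 : ℂ) • (t0 + t1))) :
    ‖⟪φ, (1 / Real.sqrt 2 : ℂ) • (t0 - t1)⟫_ℂ‖ ≥ p₀ + p₁ - 1 :=
  phase_flip_overlap_general V₀ hsa t0 t1 ht0 ht1 p₀ p₁ hp₀ hp₁ φ hφ
end
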